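/- arXiv:2401.15699 — 3 statements merged into one kernel-verified Lean document; each statement's English description precedes it below -/
import Mathlib

section
/- Let p ≥ 2 be real. There is a constant C > 0 (depending only on p) such that for all real x, y and all t ∈ [-1,1], we have | |x + t·y|^p − |x|^p − p·t·y·sign(x)·|x|^(p-1) | ≤ C · t² · |y|² · (|x|^(p-2) + |y|^(p-2)). -/
/-!
With `f u = |u| ^ p` one has `f' u = p |u| ^ (p - 2) u` and `f'' u = p (p - 1) |u| ^ (p - 2)`,
both defined everywhere because `p ≥ 2`. Two applications of the mean value theorem bound the
first-order Taylor remainder of `f` at `x` with increment `s` by `s ^ 2` times the supremum of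
`|f''|` on the segment, and there `|u| ^ (p - 2) ≤ (|x| + |s|) ^ (p - 2)`, which is at most
`2 ^ (p - 2) (|x| ^ (p - 2) + |s| ^ (p - 2))`. Finally take `s = t y` with `|t| ≤ 1`.
-/

open Set

theorem Real.sign_mul_abs (x : ℝ) : Real.sign x * |x| = x := by
  rcases lt_trichotomy x 0 with hx | rfl | hx
  · rw [Real.sign_of_neg hx, abs_of_neg hx]; ring
  · simp
  · rw [Real.sign_of_pos hx, abs_of_pos hx, one_mul]

theorem Real.sign_mul_abs_rpow_sub_one (x : ℝ) {p : ℝ} (hp : p ≠ 1) :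
    Real.sign x * |x| ^ (p - 1) = |x| ^ (p - 2) * x := by
  rcases eq_or_ne x 0 with rfl | hx
  · simp [Real.zero_rpow (sub_ne_zero.mpr hp)]
  · rw [show p - 1 = p - 2 + 1 by ring, Real.rpow_add_one (abs_ne_zero.mpr hx), mul_left_comm,
      Real.sign_mul_abs]

theorem Real.add_rpow_le_two_rpow_mul_add_rpow {a b q : ℝ} (ha : 0 ≤ a) (hb : 0 ≤ b)
    (hq : 0 ≤ q) : (a + b) ^ q ≤ 2 ^ q * (a ^ q + b ^ q) := by
  wlog hab : a ≤ b generalizing a b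
  · simpa only [add_comm] using this hb ha (le_of_not_ge hab)
  calc (a + b) ^ q ≤ (2 * b) ^ q := by gcongr; linarith
    _ = 2 ^ q * b ^ q := Real.mul_rpow zero_le_two hb
    _ ≤ 2 ^ q * (a ^ q + b ^ q) := by gcongr; exact le_add_of_nonneg_left (by positivity)

theorem hasDerivAt_abs_rpow_mul_self (x : ℝ) {q : ℝ} (hq : 0 ≤ q) :
    HasDerivAt (fun u ↦ |u| ^ q * u) ((q + 1) * |x| ^ q) x := by
  rcases eq_or_ne x 0 with rfl | hx
  · rcases hq.eq_or_lt with rfl | hq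
    · simpa using hasDerivAt_id' (0 : ℝ)
    · rw [hasDerivAt_iff_tendsto_slope]
      have hcont : ContinuousAt (fun u : ℝ ↦ |u| ^ q) 0 :=
        continuous_abs.continuousAt.rpow_const (Or.inr hq.le)
      have := hcont.tendsto.mono_left (nhdsWithin_le_nhds (s := {0}ᶜ))
      simp only [abs_zero, Real.zero_rpow hq.ne', mul_zero] at this ⊢
      refine this.congr' (eventually_nhdsWithin_of_forall fun u hu ↦ ?_)
      simp [slope_def_field, Real.zero_rpow hq.ne', mul_div_assoc,
        div_self (show u ≠ 0 from hu)]
  · have habs := (hasDerivAt_abs hx).rpow_const (p := q) (Or.inl (abs_ne_zero.mpr hx))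
    refine (habs.mul (hasDerivAt_id' x)).congr_deriv ?_
    rw [Real.rpow_sub_one (abs_ne_zero.mpr hx), mul_right_comm _ _ x, mul_right_comm _ q x,
      sign_mul_self]
    field_simp

theorem norm_image_sub_sub_smul_deriv_le {E : Type*} [NormedAddCommGroup E] [NormedSpace ℝ E]
    {f f' f'' : ℝ → E} {x y M : ℝ}
    (hf : ∀ u ∈ uIcc x y, HasDerivAt f (f' u) u)
    (hf' : ∀ u ∈ uIcc x y, HasDerivAt f' (f'' u) u)
    (hM : ∀ u ∈ uIcc x y, ‖f'' u‖ ≤ M) :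
    ‖f y - f x - (y - x) • f' x‖ ≤ M * (y - x) ^ 2 := by
  have hx : x ∈ uIcc x y := left_mem_uIcc
  have hlip (u : ℝ) (hu : u ∈ uIcc x y) : ‖f' u - (1 : ℝ) • f' x‖ ≤ M * ‖y - x‖ :=
    calc ‖f' u - (1 : ℝ) • f' x‖ ≤ M * ‖u - x‖ := by
          simpa using convex_uIcc x y |>.norm_image_sub_le_of_norm_hasDerivWithin_le
            (fun v hv ↦ (hf' v hv).hasDerivWithinAt) hM hx hu
      _ ≤ M * ‖y - x‖ := by
        have hM0 : 0 ≤ M := (norm_nonneg _).trans (hM x hx)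
        gcongr
        exact abs_sub_left_of_mem_uIcc hu
  have := convex_uIcc x y |>.norm_image_sub_le_of_norm_hasDerivWithin_le
    (f := fun u ↦ f u - (u - x) • f' x)
    (fun u hu ↦
      ((hf u hu).sub (((hasDerivAt_id' u).sub_const x).smul_const (f' x))).hasDerivWithinAt)
    hlip hx right_mem_uIcc
  simpa [sq, mul_assoc, sub_right_comm] using this

theorem abs_abs_add_rpow_sub_sub_le {p : ℝ} (hp : 2 ≤ p) (x s : ℝ) :
    |(|x + s| ^ p) - |x| ^ p - s * (p * |x| ^ (p - 2) * x)| ≤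
      p * (p - 1) * 2 ^ (p - 2) * s ^ 2 * (|x| ^ (p - 2) + |s| ^ (p - 2)) := by
  have hp2 : 0 ≤ p - 2 := by linarith
  have hf'' (u : ℝ) :
      HasDerivAt (fun u ↦ p * |u| ^ (p - 2) * u) (p * ((p - 1) * |u| ^ (p - 2))) u := by
    simpa [mul_assoc, show p - 2 + 1 = p - 1 by ring] using
      (hasDerivAt_abs_rpow_mul_self u hp2).const_mul p
  have hbound : ∀ u ∈ uIcc x (x + s), ‖p * ((p - 1) * |u| ^ (p - 2))‖ ≤
      p * (p - 1) * 2 ^ (p - 2) * (|x| ^ (p - 2) + |s| ^ (p - 2)) := fun u hu ↦ by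
    have hu : |u| ≤ |x| + |s| := by
      have := (abs_sub_abs_le_abs_sub u x).trans (abs_sub_left_of_mem_uIcc hu)
      rw [add_sub_cancel_left] at this
      linarith
    have hpow : |u| ^ (p - 2) ≤ 2 ^ (p - 2) * (|x| ^ (p - 2) + |s| ^ (p - 2)) :=
      (Real.rpow_le_rpow (abs_nonneg u) hu hp2).trans
        (Real.add_rpow_le_two_rpow_mul_add_rpow (abs_nonneg x) (abs_nonneg s) hp2)
    have hp1 : 0 ≤ p - 1 := by linarith
    rw [Real.norm_eq_abs, abs_of_nonneg (by positivity)]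
    calc p * ((p - 1) * |u| ^ (p - 2))
        ≤ p * ((p - 1) * (2 ^ (p - 2) * (|x| ^ (p - 2) + |s| ^ (p - 2)))) := by
          gcongr
      _ = _ := by ring
  have := norm_image_sub_sub_smul_deriv_le (fun u _ ↦ hasDerivAt_abs_rpow u (by linarith))
    (fun u _ ↦ hf'' u) hbound
  simp only [add_sub_cancel_left, Real.norm_eq_abs, smul_eq_mul] at this
  linarith

/-- Second-order Taylor estimate for `u ↦ |u|^p`, `p ≥ 2`: there is a constant `C > 0`
depending only on `p` such that for all reals `x, y` and `t ∈ [-1,1]`,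
`| |x+ty|^p − |x|^p − p·t·y·sign(x)·|x|^(p-1) | ≤ C t² |y|² (|x|^(p-2) + |y|^(p-2))`. -/
theorem taylor_abs_rpow_ge_two (p : ℝ) (hp : 2 ≤ p) :
    ∃ C : ℝ, 0 < C ∧ ∀ x y t : ℝ, t ∈ Set.Icc (-1 : ℝ) 1 →
      |(|x + t * y| ^ p) - |x| ^ p - p * t * y * Real.sign x * |x| ^ (p - 1)| ≤
        C * t ^ 2 * |y| ^ 2 * (|x| ^ (p - 2) + |y| ^ (p - 2)) := by
  have hC : 0 < p * (p - 1) * 2 ^ (p - 2) :=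
    mul_pos (mul_pos (by linarith) (by linarith)) (by positivity)
  refine ⟨p * (p - 1) * 2 ^ (p - 2), hC, fun x y t ht ↦ ?_⟩
  have hsign : p * t * y * Real.sign x * |x| ^ (p - 1) = t * y * (p * |x| ^ (p - 2) * x) := by
    rw [mul_assoc _ (Real.sign x), Real.sign_mul_abs_rpow_sub_one x (by linarith)]
    ring
  have hty : |t * y| ^ (p - 2) ≤ |y| ^ (p - 2) := by
    refine Real.rpow_le_rpow (abs_nonneg _) ?_ (by linarith)
    rw [abs_mul]
    exact mul_le_of_le_one_left (abs_nonneg y) (abs_le.mpr ht)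
  calc |(|x + t * y| ^ p) - |x| ^ p - p * t * y * Real.sign x * |x| ^ (p - 1)|
      ≤ p * (p - 1) * 2 ^ (p - 2) * (t * y) ^ 2 * (|x| ^ (p - 2) + |t * y| ^ (p - 2)) := by
        rw [hsign]
        exact abs_abs_add_rpow_sub_sub_le hp x (t * y)
    _ ≤ p * (p - 1) * 2 ^ (p - 2) * (t * y) ^ 2 * (|x| ^ (p - 2) + |y| ^ (p - 2)) := by
        gcongr
    _ = p * (p - 1) * 2 ^ (p - 2) * t ^ 2 * |y| ^ 2 * (|x| ^ (p - 2) + |y| ^ (p - 2)) := by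
        rw [sq_abs]
        ring
end

section
/- Let p ≥ 2. There is a constant C > 0 depending only on p such that for all real x, y and t ∈ [-1,1]: | |x + t·y|^p + |x − t·y|^p − 2|x|^p | ≤ C · t² · |y|² · (|x|^(p-2) + |y|^(p-2)). -/
/-!
By symmetry we may replace `x` and `v = t * y` by `|x|` and `|v|`. If `v ≤ x`, the points
`x ± v` stay in `[0, ∞)`, where `u ↦ u ^ p` is convex: its tangent lines squeeze the second
difference between `0` and `p v ((x + v) ^ (p - 1) - (x - v) ^ (p - 1))`, and a tangent line of
`u ↦ u ^ (p - 1)` bounds this by `2 p (p - 1) v² (x + v) ^ (p - 2)`. If `x ≤ v`, each term is at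
most `(x + v) ^ p ≤ 4 v² (x + v) ^ (p - 2)`. Finally
`(x + v) ^ (p - 2) ≤ 2 ^ (p - 2) (x ^ (p - 2) + v ^ (p - 2))`.
-/

def symmSecondDiff (f : ℝ → ℝ) (x h : ℝ) : ℝ := f (x + h) + f (x - h) - 2 * f x

theorem rpow_sub_rpow_le_mul_sub {q a b : ℝ} (hq : 1 ≤ q) (hb : 0 ≤ b) (hba : b ≤ a) :
    a ^ q - b ^ q ≤ q * a ^ (q - 1) * (a - b) := by
  rcases hba.eq_or_lt with rfl | hlt
  · simp
  have h := (convexOn_rpow hq).slope_le_of_hasDerivAt hb (hb.trans hba) hlt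
    (Real.hasDerivAt_rpow_const (Or.inr hq))
  rwa [slope_def_field, div_le_iff₀ (sub_pos.2 hlt)] at h

theorem mul_sub_le_rpow_sub_rpow {q a b : ℝ} (hq : 1 ≤ q) (hb : 0 ≤ b) (hba : b ≤ a) :
    q * b ^ (q - 1) * (a - b) ≤ a ^ q - b ^ q := by
  rcases hba.eq_or_lt with rfl | hlt
  · simp
  have h := (convexOn_rpow hq).le_slope_of_hasDerivAt hb (hb.trans hba) hlt
    (Real.hasDerivAt_rpow_const (Or.inr hq))
  rwa [slope_def_field, le_div_iff₀ (sub_pos.2 hlt)] at h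

theorem add_rpow_le_two_rpow_mul_rpow_add_rpow {q a b : ℝ} (ha : 0 ≤ a) (hb : 0 ≤ b)
    (hq : 0 ≤ q) : (a + b) ^ q ≤ 2 ^ q * (a ^ q + b ^ q) := calc
  (a + b) ^ q ≤ (2 * max a b) ^ q := by
    rw [two_mul]; gcongr <;> simp
  _ = 2 ^ q * max (a ^ q) (b ^ q) := by
    rw [Real.mul_rpow zero_le_two (ha.trans (le_max_left a b)), Real.rpow_max ha hb hq]
  _ ≤ 2 ^ q * (a ^ q + b ^ q) := by
    gcongr; exact max_le_add_of_nonneg (by positivity) (by positivity)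

theorem abs_symmSecondDiff_abs_rpow_le_of_le {p u w : ℝ} (hp : 2 ≤ p) (hw : 0 ≤ w)
    (hwu : w ≤ u) :
    |symmSecondDiff (fun s => |s| ^ p) u w| ≤ 2 * p * (p - 1) * w ^ 2 * (u + w) ^ (p - 2) := by
  have hu : 0 ≤ u := hw.trans hwu
  have hp1 : 1 ≤ p := by linarith
  simp only [symmSecondDiff]
  rw [abs_of_nonneg (add_nonneg hu hw), abs_of_nonneg (sub_nonneg.2 hwu), abs_of_nonneg hu]
  have right_le : (u + w) ^ p - u ^ p ≤ p * (u + w) ^ (p - 1) * w := by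
    simpa using rpow_sub_rpow_le_mul_sub hp1 hu (le_add_of_nonneg_right hw)
  have left_ge : p * (u - w) ^ (p - 1) * w ≤ u ^ p - (u - w) ^ p := by
    simpa using mul_sub_le_rpow_sub_rpow hp1 (sub_nonneg.2 hwu) (sub_le_self u hw)
  have slope_gap : (u + w) ^ (p - 1) - (u - w) ^ (p - 1) ≤
      (p - 1) * (u + w) ^ (p - 2) * (2 * w) := by
    have h := rpow_sub_rpow_le_mul_sub (q := p - 1) (by linarith) (sub_nonneg.2 hwu)
      (show u - w ≤ u + w by linarith)
    rw [show p - 1 - 1 = p - 2 by ring, show u + w - (u - w) = 2 * w by ring] at h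
    exact h
  have right_ge : p * u ^ (p - 1) * w ≤ (u + w) ^ p - u ^ p := by
    simpa using mul_sub_le_rpow_sub_rpow hp1 hu (le_add_of_nonneg_right hw)
  have left_le : u ^ p - (u - w) ^ p ≤ p * u ^ (p - 1) * w := by
    simpa using rpow_sub_rpow_le_mul_sub hp1 (sub_nonneg.2 hwu) (sub_le_self u hw)
  rw [abs_of_nonneg (by linarith)]
  linarith [mul_le_mul_of_nonneg_left slope_gap (by positivity : 0 ≤ p * w)]

theorem abs_symmSecondDiff_abs_rpow_le_of_ge {p u w : ℝ} (hp : 0 < p) (hu : 0 ≤ u)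
    (huw : u ≤ w) :
    |symmSecondDiff (fun s => |s| ^ p) u w| ≤ 8 * w ^ 2 * (u + w) ^ (p - 2) := by
  simp only [symmSecondDiff]
  have hsum : 0 ≤ u + w := by linarith
  rw [abs_of_nonneg hsum, abs_of_nonneg hu]
  have h₁ : |u - w| ^ p ≤ (u + w) ^ p := by
    gcongr; rw [abs_sub_comm, abs_of_nonneg (by linarith)]; linarith
  have h₂ : u ^ p ≤ (u + w) ^ p := by gcongr; linarith
  have h_split : (u + w) ^ p = (u + w) ^ 2 * (u + w) ^ (p - 2) := by
    rw [← Real.rpow_two, ← Real.rpow_add' hsum (by linarith)]; ring_nf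
  have h_sq : (u + w) ^ 2 ≤ 4 * w ^ 2 := by nlinarith
  calc |(u + w) ^ p + |u - w| ^ p - 2 * u ^ p| ≤ 2 * (u + w) ^ p := by
        rw [abs_le]
        constructor <;> linarith [Real.rpow_nonneg hu p, Real.rpow_nonneg (abs_nonneg (u - w)) p]
    _ ≤ 8 * w ^ 2 * (u + w) ^ (p - 2) := by
        rw [h_split]; nlinarith [Real.rpow_nonneg hsum (p - 2)]

theorem symmSecondDiff_abs_rpow_abs_abs (p x v : ℝ) :
    symmSecondDiff (fun s => |s| ^ p) |x| |v| = symmSecondDiff (fun s => |s| ^ p) x v := by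
  have h₁ : |-x + v| = |x - v| := by rw [neg_add_eq_sub, abs_sub_comm]
  have h₂ : |-x - v| = |x + v| := by rw [← neg_add', abs_neg]
  unfold symmSecondDiff
  rcases abs_choice x with hx | hx <;> rcases abs_choice v with hv | hv <;> rw [hx, hv] <;>
    simp only [abs_neg, sub_neg_eq_add, ← sub_eq_add_neg, h₁, h₂] <;> ring

theorem abs_symmSecondDiff_abs_rpow_le {p : ℝ} (hp : 2 ≤ p) (x v : ℝ) :
    |symmSecondDiff (fun s => |s| ^ p) x v| ≤
      (2 * p * (p - 1) + 8) * 2 ^ (p - 2) * v ^ 2 * (|x| ^ (p - 2) + |v| ^ (p - 2)) := by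
  rw [← symmSecondDiff_abs_rpow_abs_abs, ← sq_abs v]
  have hx := abs_nonneg x
  have hv := abs_nonneg v
  have hK : 0 ≤ 2 * p * (p - 1) := by nlinarith
  have h_sum := add_rpow_le_two_rpow_mul_rpow_add_rpow hx hv (sub_nonneg.2 hp)
  have h_two_regimes : |symmSecondDiff (fun s => |s| ^ p) (|x|) (|v|)| ≤
      (2 * p * (p - 1) + 8) * |v| ^ 2 * (|x| + |v|) ^ (p - 2) := by
    have h_pos : 0 ≤ |v| ^ 2 * (|x| + |v|) ^ (p - 2) := by positivity
    rcases le_total |v| |x| with hvx | hxv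
    · refine (abs_symmSecondDiff_abs_rpow_le_of_le hp hv hvx).trans ?_
      nlinarith
    · refine (abs_symmSecondDiff_abs_rpow_le_of_ge (by linarith) hx hxv).trans ?_
      nlinarith
  refine h_two_regimes.trans ?_
  calc (2 * p * (p - 1) + 8) * |v| ^ 2 * (|x| + |v|) ^ (p - 2)
      ≤ (2 * p * (p - 1) + 8) * |v| ^ 2 * (2 ^ (p - 2) * (|x| ^ (p - 2) + |v| ^ (p - 2))) := by
        gcongr
    _ = _ := by ring

/-- Parallelogram-type Taylor estimate for `u ↦ |u|^p`, `p ≥ 2`: there is a constant `C > 0`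
depending only on `p` such that for all reals `x, y` and `t ∈ [-1,1]`,
`| |x+ty|^p + |x−ty|^p − 2|x|^p | ≤ C t² |y|² (|x|^(p-2) + |y|^(p-2))`. -/
theorem parallelogram_taylor_abs_rpow (p : ℝ) (hp : 2 ≤ p) :
    ∃ C : ℝ, 0 < C ∧ ∀ x y t : ℝ, t ∈ Set.Icc (-1 : ℝ) 1 →
      |(|x + t * y| ^ p) + |x - t * y| ^ p - 2 * |x| ^ p| ≤
        C * t ^ 2 * |y| ^ 2 * (|x| ^ (p - 2) + |y| ^ (p - 2)) := by
  have hK : 0 < 2 * p * (p - 1) + 8 := by nlinarith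
  refine ⟨(2 * p * (p - 1) + 8) * 2 ^ (p - 2), by positivity, fun x y t ht => ?_⟩
  have h_ty : |t * y| ≤ |y| := by
    rw [abs_mul]; exact mul_le_of_le_one_left (abs_nonneg y) (abs_le.2 ht)
  calc |(|x + t * y| ^ p) + |x - t * y| ^ p - 2 * |x| ^ p|
      ≤ (2 * p * (p - 1) + 8) * 2 ^ (p - 2) * (t * y) ^ 2 * (|x| ^ (p - 2) + |t * y| ^ (p - 2)) :=
        abs_symmSecondDiff_abs_rpow_le hp x (t * y)
    _ ≤ (2 * p * (p - 1) + 8) * 2 ^ (p - 2) * (t * y) ^ 2 * (|x| ^ (p - 2) + |y| ^ (p - 2)) := by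
        gcongr
    _ = _ := by rw [mul_pow, ← sq_abs y]; ring
end

section
/- Let (E, dom) be a functional with Γ_p energy measures as above satisfying the Minkowski property Γ_p(f+g)(U)^(1/p) ≤ Γ_p(f)(U)^(1/p) + Γ_p(g)(U)^(1/p), Γ_p(−h) = Γ_p(h), and Γ_p(h)(X) = E(h) for all h. Let f ∈ dom and f_n ∈ dom with E(f − f_n) → 0 as n → ∞. If each Γ_p(f_n) is absolutely continuous with respect to μ, then Γ_p(f) is absolutely continuous with respect to μ. -/
/-!
Fix a `μ`-null set `s`. For every open `U ⊇ s`, Minkowski applied to `f = fₙ + (f - fₙ)` gives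
`Γ_p(f)(s)^{1/p} ≤ Γ_p(fₙ)(U)^{1/p} + E(f - fₙ)^{1/p}`. Since `Γ_p(fₙ)(s) = 0` and finite Borel
measures on a metric space are outer regular, `U` can be chosen with `Γ_p(fₙ)(U)` arbitrarily
small, so `Γ_p(f)(s)^{1/p} ≤ E(f - fₙ)^{1/p}`, and the right-hand side tends to `0`.
-/

open MeasureTheory Filter Topology ENNReal

namespace MeasureTheory.Measure

variable {X : Type*} [TopologicalSpace X] [MeasurableSpace X] {q : ℝ}

theorem rpow_measure_le_of_minkowski_of_null {ν ν₁ ν₂ : Measure X} [ν₁.OuterRegular]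
    (hq : 0 < q) (hMink : ∀ U, IsOpen U → ν U ^ q ≤ ν₁ U ^ q + ν₂ U ^ q)
    {s : Set X} (hs : ν₁ s = 0) : ν s ^ q ≤ ν₂ Set.univ ^ q := by
  refine ENNReal.le_of_forall_pos_le_add fun ε hε _ => ?_
  have hε' : (0 : ℝ≥0∞) < (ε : ℝ≥0∞) ^ q⁻¹ :=
    ENNReal.rpow_pos (by exact_mod_cast hε) coe_ne_top
  obtain ⟨U, hsU, hU, hUε⟩ := s.exists_isOpen_lt_of_lt (μ := ν₁) _ (hs ▸ hε')
  have hUε' : ν₁ U ^ q < ε := by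
    simpa [hq.ne'] using ENNReal.rpow_lt_rpow hUε hq
  calc ν s ^ q ≤ ν U ^ q := rpow_le_rpow (measure_mono hsU) hq.le
    _ ≤ ν₁ U ^ q + ν₂ U ^ q := hMink U hU
    _ ≤ ε + ν₂ Set.univ ^ q :=
        add_le_add hUε'.le (rpow_le_rpow (measure_mono (Set.subset_univ U)) hq.le)
    _ = ν₂ Set.univ ^ q + ε := add_comm _ _

theorem absolutelyContinuous_of_minkowski_approx {μ ν : Measure X} {νₙ δₙ : ℕ → Measure X}
    [∀ n, (νₙ n).OuterRegular] (hq : 0 < q)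
    (hMink : ∀ n U, IsOpen U → ν U ^ q ≤ νₙ n U ^ q + δₙ n U ^ q)
    (hδ : Tendsto (fun n => δₙ n Set.univ) atTop (𝓝 0)) (hac : ∀ n, νₙ n ≪ μ) : ν ≪ μ := by
  intro s hμs
  have hbound : ∀ n, ν s ^ q ≤ δₙ n Set.univ ^ q := fun n =>
    rpow_measure_le_of_minkowski_of_null hq (hMink n) (hac n hμs)
  have hlim : Tendsto (fun n => δₙ n Set.univ ^ q) atTop (𝓝 0) := by
    simpa [hq] using hδ.ennrpow_const q
  have hzero : ν s ^ q ≤ 0 := ge_of_tendsto' hlim hbound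
  simpa [hq, not_lt.2 hq.le] using hzero

end MeasureTheory.Measure

theorem energyMeasure_absCont_limit_general {X : Type*} [MetricSpace X] [MeasurableSpace X]
    [BorelSpace X] (μ : Measure X) (p : ℝ) (hp : 1 ≤ p)
    (Γp : (X → ℝ) → Measure X) (E : (X → ℝ) → ℝ≥0∞)
    (hfin : ∀ h : X → ℝ, IsFiniteMeasure (Γp h))
    (hmass : ∀ h : X → ℝ, Γp h Set.univ = E h)
    (hMink : ∀ f g : X → ℝ, ∀ U : Set X, IsOpen U →
      (Γp (fun x => f x + g x) U) ^ (1 / p) ≤ (Γp f U) ^ (1 / p) + (Γp g U) ^ (1 / p))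
    (f : X → ℝ) (fn : ℕ → X → ℝ)
    (hE : Tendsto (fun n => E (fun x => f x - fn n x)) atTop (𝓝 0))
    (hac : ∀ n, Γp (fn n) ≪ μ) :
    Γp f ≪ μ := by
  have : ∀ n, (Γp (fn n)).OuterRegular := fun n => by
    have := hfin (fn n)
    infer_instance
  have hsplit (n : ℕ) : (fun x => fn n x + (f x - fn n x)) = f := by
    funext x
    ring
  refine Measure.absolutelyContinuous_of_minkowski_approx (νₙ := fun n => Γp (fn n))
    (δₙ := fun n => Γp (fun x => f x - fn n x)) (one_div_pos.2 (zero_lt_one.trans_le hp)) (fun n U hU => ?_) (by simpa only [hmass] using hE) hac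
  simpa only [hsplit] using hMink (fn n) (fun x => f x - fn n x) U hU

/-- Suppose energy measures `Γ_p(h)` (finite Borel measures) satisfy the Minkowski property
`Γ_p(f+g)(U)^{1/p} ≤ Γ_p(f)(U)^{1/p} + Γ_p(g)(U)^{1/p}` on open sets, `Γ_p(−h) = Γ_p(h)`,
and have total mass `Γ_p(h)(X) = E(h)`. If `E(f − f_n) → 0` and each `Γ_p(f_n)` is absolutely
continuous with respect to `μ`, then `Γ_p(f)` is absolutely continuous with respect to `μ`. -/
theorem energyMeasure_absCont_limit {X : Type*} [MetricSpace X] [MeasurableSpace X]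
    [BorelSpace X] (μ : Measure X) (p : ℝ) (hp : 1 ≤ p)
    (Γp : (X → ℝ) → Measure X) (E : (X → ℝ) → ℝ≥0∞)
    (hfin : ∀ h : X → ℝ, IsFiniteMeasure (Γp h))
    (hmass : ∀ h : X → ℝ, Γp h Set.univ = E h)
    (hMink : ∀ f g : X → ℝ, ∀ U : Set X, IsOpen U →
      (Γp (fun x => f x + g x) U) ^ (1 / p) ≤ (Γp f U) ^ (1 / p) + (Γp g U) ^ (1 / p))
    (hneg : ∀ h : X → ℝ, Γp (fun x => -h x) = Γp h)
    (f : X → ℝ) (fn : ℕ → X → ℝ)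
    (hE : Tendsto (fun n => E (fun x => f x - fn n x)) atTop (𝓝 0))
    (hac : ∀ n, Γp (fn n) ≪ μ) :
    Γp f ≪ μ :=
  energyMeasure_absCont_limit_general μ p hp Γp E hfin hmass hMink f fn hE hac
end
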